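/- For a stochastically stationary random state ρ and any τ-invariant set Γ ∈ 𝓕 ⊗ Σ, the quenched probability of the ω-section is ℙ-a.s. constant and equals the annealed probability: ℚ_{ρ;ω}(Γ^ω) = ℚ̄_ρ(Γ) for ℙ-almost every ω. -/

import Mathlib

open MeasureTheory Matrix Filter
open scoped ComplexOrder ENNReal

/-- Cylinder set of sequences whose first n coordinates equal a given word. -/
def cyl {𝒜 : Type*} (n : ℕ) (w : Fin n → 𝒜) : Set (ℕ → 𝒜) :=
  {x | ∀ i : Fin n, x i = w i}

/-- V_{n;ω}(a_1,…,a_n) = v_{a_n; θⁿ(ω)} ⋯ v_{a_1; θ(ω)}. -/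
noncomputable def Vq {Ω 𝒜 : Type*} {d : ℕ} (v : Ω → 𝒜 → Matrix (Fin d) (Fin d) ℂ)
    (θ : Ω → Ω) (ω : Ω) : (n : ℕ) → (Fin n → 𝒜) → Matrix (Fin d) (Fin d) ℂ
  | 0, _ => 1
  | n + 1, w => v (θ^[n + 1] ω) (w (Fin.last n)) * Vq v θ ω n (fun i => w i.castSucc)

/-- The left shift σ on 𝒜^ℕ. -/
def shiftSeq {𝒜 : Type*} (x : ℕ → 𝒜) : ℕ → 𝒜 := fun k => x (k + 1)

/-- The skew shift τ(ω, ā) = (θ(ω), σ(ā)). -/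
def tau {Ω 𝒜 : Type*} (θ : Ω → Ω) : Ω × (ℕ → 𝒜) → Ω × (ℕ → 𝒜) :=
  fun p => (θ p.1, shiftSeq p.2)

/-- The annealed quantum measure ℚ̄(Γ) = ∫_Ω ℚ_ω(Γ^ω) dℙ(ω). -/
noncomputable def annealed {Ω 𝒜 : Type*} [MeasurableSpace Ω] [MeasurableSpace 𝒜] (μ : Measure Ω)
    (Q : Ω → Measure (ℕ → 𝒜)) (Γ : Set (Ω × (ℕ → 𝒜))) : ℝ≥0∞ :=
  ∫⁻ ω, Q ω {x | (ω, x) ∈ Γ} ∂μ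

/-!
Stationarity of ρ, through the Kraus identity `∑ₐ vₐ ρ_ω vₐ† = ρ_{θω}`, says that the shift pushes
the quenched measure at ω forward to the quenched measure at θω; it suffices to check this on
cylinders, which form a π-system generating the product σ-algebra. For τ-invariant Γ the ω-section
is the σ-preimage of the θω-section, so ω ↦ ℚ_ω(Γ^ω) is a.e. θ-invariant, hence a.e. constant by
ergodicity, and the constant is its integral, the annealed probability.
-/

section Cylinders

variable {𝒜 : Type*}

def cylinders (𝒜 : Type*) : Set (Set (ℕ → 𝒜)) := {s | ∃ n, ∃ w : Fin n → 𝒜, s = cyl n w}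

lemma measurableSet_cyl [MeasurableSpace 𝒜] [MeasurableSingletonClass 𝒜]
    (n : ℕ) (w : Fin n → 𝒜) : MeasurableSet (cyl n w) := by
  have h : cyl n w = ⋂ i : Fin n, (fun x : ℕ → 𝒜 => x i) ⁻¹' {w i} := by
    ext x; simp [cyl]
  rw [h]
  exact .iInter fun i => measurable_pi_apply _ (measurableSet_singleton _)

lemma cyl_inter_cyl_of_le {n m : ℕ} (h : n ≤ m) (w : Fin n → 𝒜) (u : Fin m → 𝒜)
    (hne : (cyl n w ∩ cyl m u).Nonempty) : cyl n w ∩ cyl m u = cyl m u := by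
  obtain ⟨x, hxw, hxu⟩ := hne
  refine Set.Subset.antisymm Set.inter_subset_right fun y hy => ⟨fun i => ?_, hy⟩
  have hi : (i : ℕ) < m := i.2.trans_le h
  rw [hy ⟨i, hi⟩, ← hxu ⟨i, hi⟩, hxw i]

lemma isPiSystem_cylinders : IsPiSystem (cylinders 𝒜) := by
  rintro s ⟨n, w, rfl⟩ t ⟨m, u, rfl⟩ hne
  rcases le_total n m with h | h
  · exact ⟨m, u, cyl_inter_cyl_of_le h w u hne⟩
  · refine ⟨n, w, ?_⟩
    rw [Set.inter_comm] at hne ⊢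
    exact cyl_inter_cyl_of_le h u w hne

lemma eval_preimage_eq_iUnion_cyl (i : ℕ) (s : Set 𝒜) :
    (fun x : ℕ → 𝒜 => x i) ⁻¹' s =
      ⋃ (w : Fin (i + 1) → 𝒜) (_ : w (Fin.last i) ∈ s), cyl (i + 1) w := by
  ext x
  simp only [Set.mem_preimage, Set.mem_iUnion, cyl, Set.mem_ofPred_eq]
  constructor
  · exact fun hx => ⟨fun j => x j, by simpa using hx, fun j => rfl⟩
  · rintro ⟨w, hw, hxw⟩
    simpa using (hxw (Fin.last i)).symm ▸ hw

lemma measurableSpace_eq_generateFrom_cylinders [Countable 𝒜] [MeasurableSpace 𝒜]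
    [MeasurableSingletonClass 𝒜] :
    (inferInstance : MeasurableSpace (ℕ → 𝒜)) = .generateFrom (cylinders 𝒜) := by
  refine le_antisymm (iSup_le fun i => measurable_iff_comap_le.mp ?_)
    (MeasurableSpace.generateFrom_le ?_)
  · intro s _
    rw [eval_preimage_eq_iUnion_cyl]
    exact .iUnion fun w => .iUnion fun _ =>
      MeasurableSpace.measurableSet_generateFrom ⟨i + 1, w, rfl⟩
  · rintro s ⟨n, w, rfl⟩
    exact measurableSet_cyl n w

lemma measurable_shiftSeq [MeasurableSpace 𝒜] : Measurable (shiftSeq : (ℕ → 𝒜) → ℕ → 𝒜) :=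
  measurable_pi_iff.mpr fun _ => measurable_pi_apply _

lemma shiftSeq_preimage_cyl (n : ℕ) (w : Fin n → 𝒜) :
    shiftSeq ⁻¹' cyl n w = ⋃ a : 𝒜, cyl (n + 1) (Fin.cons a w) := by
  ext x
  simp only [Set.mem_preimage, Set.mem_iUnion, cyl, Set.mem_ofPred_eq, shiftSeq]
  constructor
  · exact fun h => ⟨x 0, Fin.cases (by simp) fun j => by simpa using h j⟩
  · rintro ⟨a, h⟩ i
    simpa using h i.succ

lemma pairwise_disjoint_cyl_cons (n : ℕ) (w : Fin n → 𝒜) :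
    Pairwise (Function.onFun Disjoint fun a : 𝒜 => cyl (n + 1) (Fin.cons a w)) := by
  intro a b hab
  refine Set.disjoint_left.mpr fun x hxa hxb => hab ?_
  simpa using (hxa 0).symm.trans (hxb 0)

lemma map_shiftSeq_apply_cyl [Fintype 𝒜] [MeasurableSpace 𝒜] [MeasurableSingletonClass 𝒜]
    (P : Measure (ℕ → 𝒜)) (n : ℕ) (w : Fin n → 𝒜) :
    P.map shiftSeq (cyl n w) = ∑ a, P (cyl (n + 1) (Fin.cons a w)) := by
  rw [Measure.map_apply measurable_shiftSeq (measurableSet_cyl n w), shiftSeq_preimage_cyl,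
    measure_iUnion (pairwise_disjoint_cyl_cons n w) fun _ => measurableSet_cyl _ _,
    tsum_fintype]

end Cylinders

lemma Vq_succ_cons {Ω 𝒜 : Type*} {d : ℕ} (v : Ω → 𝒜 → Matrix (Fin d) (Fin d) ℂ)
    (θ : Ω → Ω) (ω : Ω) (n : ℕ) (a : 𝒜) (w : Fin n → 𝒜) :
    Vq v θ ω (n + 1) (Fin.cons a w) = Vq v θ (θ ω) n w * v (θ ω) a := by
  induction n with
  | zero => simp [Vq]
  | succ n ih =>
    have hinit : (fun i : Fin (n + 1) => (Fin.cons a w : Fin (n + 2) → 𝒜) i.castSucc) =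
        Fin.cons a (fun i : Fin n => w i.castSucc) := by
      funext i
      refine Fin.cases (by simp) (fun j => ?_) i
      rw [← Fin.succ_castSucc, Fin.cons_succ, Fin.cons_succ]
    have hlast : (Fin.cons a w : Fin (n + 2) → 𝒜) (Fin.last (n + 1)) = w (Fin.last n) := by
      rw [← Fin.succ_last, Fin.cons_succ]
    rw [Vq, hinit, ih, hlast, Function.iterate_succ_apply, Vq, mul_assoc]

lemma sum_ofReal_re_trace_kraus {ι n : Type*} [Fintype ι] [Fintype n] [DecidableEq n]
    (W ρ ρ' : Matrix n n ℂ) (u : ι → Matrix n n ℂ) (hρ : ρ.PosSemidef)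
    (hu : ∑ a, u a * ρ * (u a)ᴴ = ρ') :
    ∑ a, ENNReal.ofReal (W * u a * ρ * (W * u a)ᴴ).trace.re
      = ENNReal.ofReal (W * ρ' * Wᴴ).trace.re := by
  have hpos : ∀ a, 0 ≤ (W * u a * ρ * (W * u a)ᴴ).trace.re := fun a =>
    (Complex.nonneg_iff.mp (hρ.mul_mul_conjTranspose_same (W * u a)).trace_nonneg).1
  rw [← ENNReal.ofReal_sum_of_nonneg fun a _ => hpos a, ← Complex.re_sum, ← trace_sum, ← hu,
    Finset.mul_sum, Finset.sum_mul]
  simp only [conjTranspose_mul, mul_assoc]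

lemma ae_map_shiftSeq_eq {Ω 𝒜 : Type*} {d : ℕ} [Fintype 𝒜] [MeasurableSpace 𝒜]
    [MeasurableSingletonClass 𝒜] [MeasurableSpace Ω] {μ : Measure Ω} {θ : Ω → Ω}
    (hθ : Measure.QuasiMeasurePreserving θ μ μ)
    (v : Ω → 𝒜 → Matrix (Fin d) (Fin d) ℂ) (ρ : Ω → Matrix (Fin d) (Fin d) ℂ)
    (hρ : ∀ᵐ ω ∂μ, (ρ ω).PosSemidef)
    (hstat : ∀ᵐ ω ∂μ, ∑ a, v (θ ω) a * ρ ω * (v (θ ω) a)ᴴ = ρ (θ ω))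
    (Q : Ω → Measure (ℕ → 𝒜)) (hQp : ∀ ω, IsProbabilityMeasure (Q ω))
    (hQcyl : ∀ n (w : Fin n → 𝒜), ∀ᵐ ω ∂μ,
      Q ω (cyl n w) = ENNReal.ofReal
        (Matrix.trace (Vq v θ ω n w * ρ ω * (Vq v θ ω n w)ᴴ)).re) :
    ∀ᵐ ω ∂μ, (Q ω).map shiftSeq = Q (θ ω) := by
  have hcyl : ∀ᵐ ω ∂μ, ∀ n (w : Fin n → 𝒜), Q ω (cyl n w) = ENNReal.ofReal
      (Matrix.trace (Vq v θ ω n w * ρ ω * (Vq v θ ω n w)ᴴ)).re :=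
    ae_all_iff.mpr fun n => ae_all_iff.mpr (hQcyl n)
  filter_upwards [hcyl, hθ.ae hcyl, hstat, hρ] with ω hω hθω hst hρω
  have := hQp ω
  refine ext_of_generate_finite _ measurableSpace_eq_generateFrom_cylinders isPiSystem_cylinders
    ?_ (by rw [Measure.map_apply measurable_shiftSeq .univ, Set.preimage_univ, measure_univ,
      (hQp (θ ω)).measure_univ])
  rintro s ⟨n, w, rfl⟩
  simp_rw [map_shiftSeq_apply_cyl, hω, Vq_succ_cons]
  rw [sum_ofReal_re_trace_kraus _ _ _ _ hρω hst, hθω]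

lemma measurable_measure_section {Ω 𝒜 : Type*} [MeasurableSpace Ω] [MeasurableSpace 𝒜]
    (Q : Ω → Measure (ℕ → 𝒜)) (hQp : ∀ ω, IsProbabilityMeasure (Q ω))
    (hQmeas : ∀ E : Set (ℕ → 𝒜), MeasurableSet E → Measurable fun ω => Q ω E)
    {Γ : Set (Ω × (ℕ → 𝒜))} (hΓ : MeasurableSet Γ) :
    Measurable fun ω => Q ω {x | (ω, x) ∈ Γ} :=
  let κ : ProbabilityTheory.Kernel Ω (ℕ → 𝒜) := ⟨Q, Measure.measurable_of_measurable_coe _ hQmeas⟩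
  have : ProbabilityTheory.IsMarkovKernel κ := ⟨hQp⟩
  ProbabilityTheory.Kernel.measurable_kernel_prodMk_left (κ := κ) hΓ

lemma section_eq_shiftSeq_preimage_section {Ω 𝒜 : Type*} {θ : Ω → Ω}
    {Γ : Set (Ω × (ℕ → 𝒜))} (hΓ : tau θ ⁻¹' Γ = Γ) (ω : Ω) :
    {x | (ω, x) ∈ Γ} = shiftSeq ⁻¹' {x | (θ ω, x) ∈ Γ} := by
  conv_lhs => rw [← hΓ]
  rfl

lemma Ergodic.ae_eq_lintegral_of_ae_eq_comp {Ω : Type*} [MeasurableSpace Ω] {μ : Measure Ω}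
    [IsProbabilityMeasure μ] {θ : Ω → Ω} (hθ : Ergodic θ μ) {g : Ω → ℝ≥0∞}
    (hg : Measurable g) (hinv : g ∘ θ =ᵐ[μ] g) : ∀ᵐ ω ∂μ, g ω = ∫⁻ ω, g ω ∂μ := by
  obtain ⟨c, hc⟩ := hθ.ae_eq_const_of_ae_eq_comp₀ hg.nullMeasurable hinv
  rw [lintegral_congr_ae hc]
  filter_upwards [hc] with ω hω
  simp [hω]

theorem stmt10_general {Ω 𝒜 : Type*} {d : ℕ} [Fintype 𝒜] [MeasurableSpace 𝒜]
    [MeasurableSingletonClass 𝒜]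
    [MeasurableSpace Ω] (μ : Measure Ω) [IsProbabilityMeasure μ]
    (θ : Ω → Ω) (hθ : Ergodic θ μ)
    (v : Ω → 𝒜 → Matrix (Fin d) (Fin d) ℂ)
    (ρ : Ω → Matrix (Fin d) (Fin d) ℂ)
    (hρ : ∀ᵐ ω ∂μ, (ρ ω).PosSemidef ∧ (ρ ω).trace = 1)
    (hstat : ∀ᵐ ω ∂μ, ∑ a, v (θ ω) a * ρ ω * (v (θ ω) a)ᴴ = ρ (θ ω))
    (Q : Ω → Measure (ℕ → 𝒜)) (hQp : ∀ ω, IsProbabilityMeasure (Q ω))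
    (hQmeas : ∀ E : Set (ℕ → 𝒜), MeasurableSet E → Measurable fun ω => Q ω E)
    (hQcyl : ∀ n (w : Fin n → 𝒜), ∀ᵐ ω ∂μ,
      Q ω (cyl n w) = ENNReal.ofReal
        (Matrix.trace (Vq v θ ω n w * ρ ω * (Vq v θ ω n w)ᴴ)).re)
    (Γ : Set (Ω × (ℕ → 𝒜))) (hΓ : MeasurableSet Γ) (hΓinv : tau θ ⁻¹' Γ = Γ) :
    ∀ᵐ ω ∂μ, Q ω {x | (ω, x) ∈ Γ} = annealed μ Q Γ := by
  have hshift := ae_map_shiftSeq_eq hθ.toMeasurePreserving.quasiMeasurePreserving v ρ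
    (hρ.mono fun _ h => h.1) hstat Q hQp hQcyl
  refine hθ.ae_eq_lintegral_of_ae_eq_comp (measurable_measure_section Q hQp hQmeas hΓ) ?_
  filter_upwards [hshift] with ω hω
  change Q (θ ω) _ = Q ω _
  rw [section_eq_shiftSeq_preimage_section hΓinv ω, ← hω]
  exact Measure.map_apply measurable_shiftSeq (measurable_prodMk_left hΓ)

/-- For a stochastically stationary random state ρ and any τ-invariant set Γ, the quenched
probability of the ω-section is ℙ-a.s. constant and equals the annealed probability. -/
theorem stmt10 {Ω 𝒜 : Type*} {d : ℕ} [Fintype 𝒜] [MeasurableSpace 𝒜]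
    [MeasurableSingletonClass 𝒜]
    [MeasurableSpace Ω] (μ : Measure Ω) [IsProbabilityMeasure μ]
    (θ θinv : Ω → Ω) (hθ : Ergodic θ μ)
    (hinvm : Measurable θinv) (hli : Function.LeftInverse θinv θ)
    (hri : Function.RightInverse θinv θ)
    (v : Ω → 𝒜 → Matrix (Fin d) (Fin d) ℂ)
    (hvmeas : ∀ a i j, Measurable fun ω => v ω a i j)
    (hv : ∀ᵐ ω ∂μ, ∑ a, (v ω a)ᴴ * v ω a = 1)
    (ρ : Ω → Matrix (Fin d) (Fin d) ℂ)
    (hρmeas : ∀ i j, Measurable fun ω => ρ ω i j)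
    (hρ : ∀ᵐ ω ∂μ, (ρ ω).PosSemidef ∧ (ρ ω).trace = 1)
    (hstat : ∀ᵐ ω ∂μ, ∑ a, v (θ ω) a * ρ ω * (v (θ ω) a)ᴴ = ρ (θ ω))
    (Q : Ω → Measure (ℕ → 𝒜)) (hQp : ∀ ω, IsProbabilityMeasure (Q ω))
    (hQmeas : ∀ E : Set (ℕ → 𝒜), MeasurableSet E → Measurable fun ω => Q ω E)
    (hQcyl : ∀ n (w : Fin n → 𝒜), ∀ᵐ ω ∂μ,
      Q ω (cyl n w) = ENNReal.ofReal
        (Matrix.trace (Vq v θ ω n w * ρ ω * (Vq v θ ω n w)ᴴ)).re)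
    (Γ : Set (Ω × (ℕ → 𝒜))) (hΓ : MeasurableSet Γ) (hΓinv : tau θ ⁻¹' Γ = Γ) :
    ∀ᵐ ω ∂μ, Q ω {x | (ω, x) ∈ Γ} = annealed μ Q Γ :=
  stmt10_general μ θ hθ v ρ hρ hstat Q hQp hQmeas hQcyl Γ hΓ hΓinv
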